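/- Let H = |Ψ⁻⟩⟨Ψ⁻|₁₂ + |Ψ⁻⟩⟨Ψ⁻|₂₃ + |Ψ⁻⟩⟨Ψ⁻|₃₄ on (ℂ²)^{⊗4} and let Q = (1/2)(|00⟩+|11⟩)(⟨00|+⟨11|)₂₄ (acting as identity on qubits 1 and 3, with no Z₃ string). Then the product state φ = ⊗_{j=1}^{4} (|0⟩ + i|1⟩)/√2 satisfies Hφ = 0 and Qφ = 0. -/
import Mathlib


/-- Hamming weight of a 4-bit configuration. -/
def wt (f : Fin 4 → Bool) : ℕ := (Finset.univ.filter fun i => f i = true).card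

/-- Action of the projector onto the two-qubit singlet |Ψ⁻⟩ = (|01⟩ − |10⟩)/√2 at
positions p and q (identity elsewhere). -/
noncomputable def singletProj (n : ℕ) (p q : Fin n) (ψ : (Fin n → Bool) → ℂ) :
    (Fin n → Bool) → ℂ :=
  fun f =>
    if f p ≠ f q then
      (ψ f - ψ (fun i => if i = p then f q else if i = q then f p else f i)) / 2
    else 0

/-- Flip qubits 2 and 4 (indices 1 and 3). -/
def flip13 (f : Fin 4 → Bool) : Fin 4 → Bool :=
  fun i => if i = 1 then !f i else if i = 3 then !f i else f i

/-- Action of Q = (1/2)(|00⟩+|11⟩)(⟨00|+⟨11|) on qubits 2 and 4 (identity on qubits 1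
and 3, with no Jordan–Wigner Z₃ string). -/
noncomputable def Q24 (ψ : (Fin 4 → Bool) → ℂ) : (Fin 4 → Bool) → ℂ :=
  fun f => if f 1 = f 3 then (ψ f + ψ (flip13 f)) / 2 else 0

/-- The product state φ = ⊗_{j=1}^{4} (|0⟩ + i|1⟩)/√2, with amplitudes
(1/4)·i^{weight}. -/
noncomputable def phiProd : (Fin 4 → Bool) → ℂ :=
  fun f => (1 / 4 : ℂ) * Complex.I ^ wt f

lemma wt_eq (f : Fin 4 → Bool) :
    wt f = (if f 0 then 1 else 0) + (if f 1 then 1 else 0)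
      + (if f 2 then 1 else 0) + (if f 3 then 1 else 0) := by
  rw [wt, Finset.card_filter, Fin.sum_univ_four]

lemma flip13_0 (f : Fin 4 → Bool) : flip13 f 0 = f 0 := rfl
lemma flip13_1 (f : Fin 4 → Bool) : flip13 f 1 = !f 1 := rfl
lemma flip13_2 (f : Fin 4 → Bool) : flip13 f 2 = f 2 := rfl
lemma flip13_3 (f : Fin 4 → Bool) : flip13 f 3 = !f 3 := rfl

lemma wt_swap (p q : Fin 4) (f : Fin 4 → Bool) :
    wt (fun i => if i = p then f q else if i = q then f p else f i) = wt f := by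
  rcases eq_or_ne p q with h | h
  · subst h
    have : (fun i => if i = p then f p else if i = p then f p else f i) = f := by
      funext i; split <;> simp_all
    rw [this]
  · rw [wt_eq, wt_eq]
    fin_cases p <;> fin_cases q <;> simp_all <;> ring

lemma singlet_zero (p q : Fin 4) : singletProj 4 p q phiProd = fun _ => 0 := by
  funext f
  simp only [singletProj, phiProd, wt_swap]
  split <;> ring

/-- The product state φ satisfies Hφ = 0 for the Heisenberg line Hamiltonian
H = |Ψ⁻⟩⟨Ψ⁻|₁₂ + |Ψ⁻⟩⟨Ψ⁻|₂₃ + |Ψ⁻⟩⟨Ψ⁻|₃₄ and Qφ = 0. -/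
theorem stmt19 :
    (fun f => singletProj 4 0 1 phiProd f + singletProj 4 1 2 phiProd f
      + singletProj 4 2 3 phiProd f) = 0 ∧
    Q24 phiProd = 0 := by
  constructor
  · funext f
    simp [singlet_zero]
  · funext f
    simp only [Q24, phiProd]
    split
    · rename_i h
      rw [wt_eq, wt_eq, flip13_0, flip13_1, flip13_2, flip13_3]
      cases h0 : f 0 <;> cases h1 : f 1 <;> cases h2 : f 2 <;> cases h3 : f 3 <;>
        simp_all [pow_succ, Complex.I_mul_I]
    · rfl
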